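/- Under assumption (A1), the sequence {x^k} generated by the MPG algorithm converges to a weakly Pareto optimal point of the multiobjective problem min F. -/

import Mathlib

/-!
The proximal subproblem makes `u ↦ ψₓ(u) + ‖u - x‖² / (2α)` strongly convex, so its minimiser `p`
satisfies a three-point inequality. At `z = x` it gives `‖p - x‖² ≤ -α ψₓ(p)`: an Armijo step
decreases every objective, and one of them by `t (1 - γα/2) (-ψₓ(p))`, so by (A1) these decrements
are summable. At any `z` lying below the whole trajectory (`ψₓₖ(z) ≤ 0`) the same inequality makes
`‖xₖ - z‖²` quasi-Fejér, so the bounded sequence `xₖ` converges to its cluster point `x̄`.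
Backtracking forces `pₖ - xₖ → 0`: a failed Armijo test at a step `s ≤ tₖ / τ₁` means that some
gradient varies by more than `γ ‖pₖ - xₖ‖ / 2` over a segment of length
`s ‖pₖ - xₖ‖ ≤ ‖xₖ₊₁ - xₖ‖ / τ₁ → 0`. Passing to the limit in the three-point inequality then gives
`ψ_x̄ ≥ 0` on the domain, and by the gradient inequality no point of the domain improves every
objective at `x̄`.
-/

open RealInnerProductSpace Filter Topology Set

section InnerProductSpace

variable {E : Type*} [NormedAddCommGroup E] [InnerProductSpace ℝ E]

theorem ConvexOn.inner_gradient_le_sub [CompleteSpace E] {f : E → ℝ} {f' x : E}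
    (hf : ConvexOn ℝ univ f) (hx : HasGradientAt f f' x) (y : E) : ⟪f', y - x⟫ ≤ f y - f x := by
  have hline : ConvexOn ℝ univ (f ∘ AffineMap.lineMap (k := ℝ) x y) := by
    simpa using hf.comp_affineMap (AffineMap.lineMap x y)
  have hderiv : HasDerivAt (f ∘ AffineMap.lineMap (k := ℝ) x y) ⟪f', y - x⟫ 0 := by
    have hfx : HasFDerivAt f (InnerProductSpace.toDual ℝ E f') (AffineMap.lineMap x y (0 : ℝ)) := by
      simpa using hx.hasFDerivAt
    simpa using hfx.comp_hasDerivAt (0 : ℝ) AffineMap.hasDerivAt_lineMap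
  simpa [slope_def_field] using
    hline.le_slope_of_hasDerivAt (mem_univ 0) (mem_univ 1) one_pos hderiv

theorem norm_smul_add_smul_sq {a b : ℝ} (hab : a + b = 1) (u v : E) :
    ‖a • u + b • v‖ ^ 2 = a * ‖u‖ ^ 2 + b * ‖v‖ ^ 2 - a * b * ‖u - v‖ ^ 2 := by
  rw [← real_inner_self_eq_norm_sq, ← real_inner_self_eq_norm_sq, ← real_inner_self_eq_norm_sq,
    ← real_inner_self_eq_norm_sq]
  simp only [inner_add_add_self, inner_sub_sub_self, real_inner_smul_left, real_inner_smul_right]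
  obtain rfl := eq_sub_of_add_eq hab
  ring

theorem strongConvexOn_mul_sq_norm_sub {s : Set E} (hs : Convex ℝ s) (c : ℝ) (x : E) :
    StrongConvexOn s (2 * c) fun u => c * ‖u - x‖ ^ 2 := by
  refine ⟨hs, fun u _ v _ a b _ _ hab => le_of_eq ?_⟩
  have hcomb : a • u + b • v - x = a • (u - x) + b • (v - x) := by
    rw [smul_sub, smul_sub, sub_add_sub_comm, ← add_smul, hab, one_smul]
  simp only [hcomb, norm_smul_add_smul_sq hab, sub_sub_sub_cancel_right, smul_eq_mul]
  ring

theorem ConvexOn.strongConvexOn_add_mul_sq_norm_sub {s : Set E} {ψ : E → ℝ}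
    (hψ : ConvexOn ℝ s ψ) (c : ℝ) (x : E) :
    StrongConvexOn s (2 * c) fun u => ψ u + c * ‖u - x‖ ^ 2 := by
  have h := (uniformConvexOn_zero.2 hψ).add (strongConvexOn_mul_sq_norm_sub hψ.1 c x)
  rwa [zero_add] at h

theorem StrongConvexOn.add_sq_norm_sub_le_of_isMinOn {s : Set E} {f : E → ℝ} {m : ℝ} {p z : E}
    (hf : StrongConvexOn s m f) (hp : IsMinOn f s p) (hps : p ∈ s) (hz : z ∈ s) :
    f p + m / 2 * ‖z - p‖ ^ 2 ≤ f z := by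
  have hseg : ∀ a ∈ Ioo (0 : ℝ) 1, f p + (1 - a) * (m / 2 * ‖z - p‖ ^ 2) ≤ f z := by
    rintro a ⟨ha₀, ha₁⟩
    have hmin := hp (hf.1 hz hps ha₀.le (sub_nonneg.2 ha₁.le) (add_sub_cancel a 1))
    have hconv := hf.2 hz hps ha₀.le (sub_nonneg.2 ha₁.le) (add_sub_cancel a 1)
    simp only [mem_ofPred_eq, smul_eq_mul] at hmin hconv
    nlinarith
  have hlim : Tendsto (fun a : ℝ => f p + (1 - a) * (m / 2 * ‖z - p‖ ^ 2)) (𝓝[>] 0)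
      (𝓝 (f p + m / 2 * ‖z - p‖ ^ 2)) := by
    refine Tendsto.mono_left ?_ nhdsWithin_le_nhds
    exact Continuous.tendsto' (by fun_prop) _ _ (by ring)
  exact le_of_tendsto hlim (eventually_of_mem (Ioo_mem_nhdsGT one_pos) hseg)

theorem ConvexOn.three_point_of_isMinOn {s : Set E} {ψ : E → ℝ} {c : ℝ} {x p z : E}
    (hψ : ConvexOn ℝ s ψ) (hp : IsMinOn (fun u => ψ u + c * ‖u - x‖ ^ 2) s p) (hps : p ∈ s)
    (hz : z ∈ s) : ψ p + c * ‖p - x‖ ^ 2 + c * ‖z - p‖ ^ 2 ≤ ψ z + c * ‖z - x‖ ^ 2 := by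
  have h := (hψ.strongConvexOn_add_mul_sq_norm_sub c x).add_sq_norm_sub_le_of_isMinOn hp hps hz
  linarith

theorem ConvexOn.mul_norm_lt_norm_gradient_sub [CompleteSpace E] {g : E → ℝ} {g'x g'y x d : E}
    {s γ : ℝ} (hg : ConvexOn ℝ univ g) (hy : HasGradientAt g g'y (x + s • d)) (hs : 0 < s)
    (hviol : g x + s * ⟪g'x, d⟫ + s * (γ / 2) * ‖d‖ ^ 2 < g (x + s • d)) :
    γ / 2 * ‖d‖ < ‖g'y - g'x‖ := by
  have hback := hg.inner_gradient_le_sub hy x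
  rw [sub_add_cancel_left, inner_neg_right, real_inner_smul_right] at hback
  have hslope : s * (γ / 2 * ‖d‖ ^ 2) < s * ⟪g'y - g'x, d⟫ := by
    rw [inner_sub_left]; linarith
  have hcs : ⟪g'y - g'x, d⟫ ≤ ‖g'y - g'x‖ * ‖d‖ := real_inner_le_norm _ _
  have hd : 0 < ‖d‖ := by
    by_contra! h
    rw [norm_le_zero_iff.1 h] at hslope
    simp at hslope
  nlinarith [lt_of_mul_lt_mul_left hslope hs.le]

end InnerProductSpace

theorem summable_of_forall_le_of_exists_add_le {ι : Type*} [Fintype ι] {f : ℕ → ι → ℝ}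
    {a : ℕ → ℝ} (b : ι → ℝ) (ha : ∀ k, 0 ≤ a k) (hf : ∀ k j, f (k + 1) j ≤ f k j)
    (hdec : ∀ k, ∃ j, f (k + 1) j + a k ≤ f k j) (hb : ∀ k j, b j ≤ f k j) : Summable a := by
  set Φ : ℕ → ℝ := fun k => ∑ j, f k j
  have hstep : ∀ k, a k ≤ Φ k - Φ (k + 1) := by
    intro k
    obtain ⟨j, hj⟩ := hdec k
    calc a k ≤ f k j - f (k + 1) j := by linarith
      _ ≤ ∑ j, (f k j - f (k + 1) j) :=
        Finset.single_le_sum (fun j _ => sub_nonneg.2 (hf k j)) (Finset.mem_univ j)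
      _ = Φ k - Φ (k + 1) := Finset.sum_sub_distrib _ _
  refine summable_of_sum_range_le (c := Φ 0 - ∑ j, b j) ha fun n => ?_
  calc ∑ i ∈ Finset.range n, a i ≤ ∑ i ∈ Finset.range n, (Φ i - Φ (i + 1)) :=
        Finset.sum_le_sum fun i _ => hstep i
    _ = Φ 0 - Φ n := Finset.sum_range_sub' Φ n
    _ ≤ Φ 0 - ∑ j, b j := by linarith [Finset.sum_le_sum fun j (_ : j ∈ Finset.univ) => hb n j]

theorem exists_tendsto_of_le_add_of_summable {a e : ℕ → ℝ} (ha : ∀ k, 0 ≤ a k)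
    (he : ∀ k, 0 ≤ e k) (hsum : Summable e) (hrec : ∀ k, a (k + 1) ≤ a k + e k) :
    ∃ L, Tendsto a atTop (𝓝 L) := by
  set b : ℕ → ℝ := fun k => a k - ∑ i ∈ Finset.range k, e i
  have hanti : Antitone b := antitone_nat_of_succ_le fun k => by
    simp only [b, Finset.sum_range_succ]; linarith [hrec k]
  have hbdd : BddBelow (range b) := ⟨-∑' i, e i, by
    rintro _ ⟨k, rfl⟩
    linarith [ha k, hsum.sum_le_tsum (Finset.range k) fun i _ => he i]⟩
  refine ⟨(⨅ k, b k) + ∑' i, e i, ?_⟩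
  simpa [b] using (tendsto_atTop_ciInf hanti hbdd).add hsum.hasSum.tendsto_sum_nat

theorem exists_tendsto_of_quasiFejer {X : Type*} [MetricSpace X] [ProperSpace X] {x : ℕ → X}
    {Z : Set X} {e : ℕ → ℝ} (he : ∀ k, 0 ≤ e k) (hsum : Summable e) (hZ : Z.Nonempty)
    (hfejer : ∀ z ∈ Z, ∀ k, dist (x (k + 1)) z ^ 2 ≤ dist (x k) z ^ 2 + e k)
    (hcluster : ∀ z (φ : ℕ → ℕ), StrictMono φ → Tendsto (x ∘ φ) atTop (𝓝 z) → z ∈ Z) :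
    ∃ z ∈ Z, Tendsto x atTop (𝓝 z) := by
  have hconv : ∀ z ∈ Z, ∃ L, Tendsto (fun k => dist (x k) z ^ 2) atTop (𝓝 L) := fun z hz =>
    exists_tendsto_of_le_add_of_summable (fun k => sq_nonneg _) he hsum (hfejer z hz)
  obtain ⟨z₀, hz₀⟩ := hZ
  obtain ⟨L₀, hL₀⟩ := hconv z₀ hz₀
  obtain ⟨R, hR⟩ := hL₀.bddAbove_range
  have hbounded : ∀ k, x k ∈ Metric.closedBall z₀ (R + 1) := fun k => by
    have : dist (x k) z₀ ^ 2 ≤ R := hR ⟨k, rfl⟩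
    rw [Metric.mem_closedBall]
    nlinarith [dist_nonneg (x := x k) (y := z₀)]
  obtain ⟨z, -, φ, hφ, hsub⟩ := tendsto_subseq_of_bounded Metric.isBounded_closedBall hbounded
  have hz := hcluster z φ hφ hsub
  obtain ⟨L, hL⟩ := hconv z hz
  have hsub0 : Tendsto (fun k => dist (x (φ k)) z ^ 2) atTop (𝓝 0) := by
    simpa using ((tendsto_iff_dist_tendsto_zero.1 hsub).pow 2)
  obtain rfl : L = 0 := tendsto_nhds_unique (hL.comp hφ.tendsto_atTop) hsub0
  refine ⟨z, hz, tendsto_iff_dist_tendsto_zero.2 ?_⟩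
  simpa [Real.sqrt_sq dist_nonneg] using hL.sqrt

theorem le_of_antitone_of_tendsto_subseq {X : Type*} [TopologicalSpace X] {f : X → ℝ}
    {D : Set X} {x : ℕ → X} {φ : ℕ → ℕ} {z : X} (hf : ContinuousWithinAt f D z)
    (hxD : ∀ k, x k ∈ D) (hanti : Antitone (f ∘ x)) (hφ : StrictMono φ)
    (hlim : Tendsto (x ∘ φ) atTop (𝓝 z)) (k : ℕ) : f z ≤ f (x k) := by
  have hfφ : Tendsto (f ∘ x ∘ φ) atTop (𝓝 (f z)) :=
    hf.tendsto.comp (tendsto_nhdsWithin_iff.2 ⟨hlim, Eventually.of_forall fun l => hxD _⟩)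
  exact ((hanti.comp_monotone hφ.monotone).le_of_tendsto hfφ k).trans (hanti hφ.le_apply)

section Model

/-- The max-term `ψₓ(u)` of the MPG subproblem at `x`. -/
noncomputable def mpgModel {ι E : Type*} [NormedAddCommGroup E] [InnerProductSpace ℝ E]
    (G' : ι → E → E) (H : ι → E → ℝ) (x u : E) : ℝ :=
  ⨆ i, (⟪G' i x, u - x⟫ + H i u - H i x)

variable {ι E : Type*} [NormedAddCommGroup E] [InnerProductSpace ℝ E]
  {G H : ι → E → ℝ} {G' : ι → E → E} {D : Set E} {x u : E}

theorem le_mpgModel [Finite ι] (i : ι) : ⟪G' i x, u - x⟫ + H i u - H i x ≤ mpgModel G' H x u :=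
  le_ciSup (f := fun i => ⟪G' i x, u - x⟫ + H i u - H i x) (Finite.bddAbove_range _) i

theorem mpgModel_self [Nonempty ι] : mpgModel G' H x x = 0 := by
  simp [mpgModel]

theorem convexOn_mpgModel [Finite ι] [Nonempty ι] (hH : ∀ i, ConvexOn ℝ D (H i)) :
    ConvexOn ℝ D (mpgModel G' H x) := by
  refine ⟨(hH (Classical.arbitrary ι)).1, fun u hu v hv a b ha hb hab => ciSup_le fun i => ?_⟩
  have hinner : ⟪G' i x, a • u + b • v - x⟫ = a * ⟪G' i x, u - x⟫ + b * ⟪G' i x, v - x⟫ := by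
    rw [← inner_smul_right, ← inner_smul_right, ← inner_add_right]
    congr 1
    rw [smul_sub, smul_sub, sub_add_sub_comm, ← add_smul, hab, one_smul]
  have hHab := (hH i).2 hu hv ha hb hab
  have hu' := mul_le_mul_of_nonneg_left (le_mpgModel (G' := G') (H := H) (x := x) (u := u) i) ha
  have hv' := mul_le_mul_of_nonneg_left (le_mpgModel (G' := G') (H := H) (x := x) (u := v) i) hb
  simp only [smul_eq_mul] at hHab ⊢
  have : H i x = a * H i x + b * H i x := by rw [← add_mul, hab, one_mul]
  rw [hinner]
  nlinarith

theorem mpgModel_nonpos [Nonempty ι] [CompleteSpace E] {z : E} (hG : ∀ i, ConvexOn ℝ univ (G i))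
    (hG' : ∀ i, HasGradientAt (G i) (G' i x) x) (hz : ∀ i, G i z + H i z ≤ G i x + H i x) :
    mpgModel G' H x z ≤ 0 :=
  ciSup_le fun i => by linarith [(hG i).inner_gradient_le_sub (hG' i) z, hz i]

theorem not_exists_lt_of_mpgModel_nonneg [Finite ι] [Nonempty ι] [CompleteSpace E]
    (hG : ∀ i, ConvexOn ℝ univ (G i)) (hG' : ∀ i, HasGradientAt (G i) (G' i x) x)
    (hx : ∀ y ∈ D, 0 ≤ mpgModel G' H x y) :
    ¬ ∃ y ∈ D, ∀ i, G i y + H i y < G i x + H i x := by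
  rintro ⟨y, hy, hlt⟩
  obtain ⟨i, hi⟩ := exists_eq_ciSup_of_finite (f := fun i => ⟪G' i x, y - x⟫ + H i y - H i x)
  have := hx y hy
  rw [mpgModel, ← hi] at this
  linarith [(hG i).inner_gradient_le_sub (hG' i) y, hlt i]

theorem continuousOn_mpgModel [Fintype ι] [Nonempty ι] (hG' : ∀ i, Continuous (G' i))
    (hH : ∀ i, ContinuousOn (H i) D) :
    ContinuousOn (fun q : E × E => mpgModel G' H q.1 q.2) (D ×ˢ D) := by
  simp only [mpgModel, ← Finset.sup'_univ_eq_ciSup]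
  refine ContinuousOn.finset_sup'_apply _ fun i _ => ?_
  refine ((Continuous.continuousOn (by fun_prop)).add ((hH i).comp continuousOn_snd ?_)).sub
    ((hH i).comp continuousOn_fst ?_)
  · exact fun q hq => hq.2
  · exact fun q hq => hq.1

theorem sq_norm_sub_le_neg_mul_mpgModel [Finite ι] [Nonempty ι] {α : ℝ} {p : E} (hα : 0 < α)
    (hH : ∀ i, ConvexOn ℝ D (H i))
    (hp : IsMinOn (fun u => mpgModel G' H x u + 1 / (2 * α) * ‖u - x‖ ^ 2) D p) (hpD : p ∈ D)
    (hxD : x ∈ D) : ‖p - x‖ ^ 2 ≤ -α * mpgModel G' H x p := by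
  have h := (convexOn_mpgModel hH).three_point_of_isMinOn hp hpD hxD
  rw [mpgModel_self, sub_self, norm_zero, norm_sub_rev x p] at h
  field_simp at h
  nlinarith

theorem mpg_descent [Finite ι] {j : ι} {α γ t : ℝ} {p : E} (hγ : 0 ≤ γ)
    (hH : ConvexOn ℝ D (H j)) (hxD : x ∈ D) (hpD : p ∈ D) (ht₀ : 0 ≤ t) (ht₁ : t ≤ 1)
    (hd : ‖p - x‖ ^ 2 ≤ -α * mpgModel G' H x p)
    (harmijo : G j (x + t • (p - x)) ≤ G j x + t * ⟪G' j x, p - x⟫ + t * (γ / 2) * ‖p - x‖ ^ 2) :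
    G j (x + t • (p - x)) + H j (x + t • (p - x)) + t * (1 - γ * α / 2) * -mpgModel G' H x p
      ≤ G j x + H j x := by
  have hcomb : x + t • (p - x) = (1 - t) • x + t • p := by
    module
  have hHstep := hH.2 hxD hpD (sub_nonneg.2 ht₁) ht₀ (sub_add_cancel 1 t)
  rw [← hcomb, smul_eq_mul, smul_eq_mul] at hHstep
  have hterm := mul_le_mul_of_nonneg_left (le_mpgModel (G' := G') (H := H) (x := x) (u := p) j) ht₀
  have hquad := mul_le_mul_of_nonneg_left hd (by positivity : 0 ≤ t * (γ / 2))
  nlinarith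

theorem sq_norm_mpg_step_sub_le [Finite ι] [Nonempty ι] {α t : ℝ} {p z : E} (hα : 0 < α)
    (hH : ∀ i, ConvexOn ℝ D (H i))
    (hp : IsMinOn (fun u => mpgModel G' H x u + 1 / (2 * α) * ‖u - x‖ ^ 2) D p) (hpD : p ∈ D)
    (hzD : z ∈ D) (ht₀ : 0 ≤ t) (ht₁ : t ≤ 1) (hz : mpgModel G' H x z ≤ 0) :
    ‖x + t • (p - x) - z‖ ^ 2 ≤ ‖x - z‖ ^ 2 + 2 * α * t * -mpgModel G' H x p := by
  have h := (convexOn_mpgModel hH).three_point_of_isMinOn hp hpD hzD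
  rw [norm_sub_rev z p, norm_sub_rev z x] at h
  field_simp at h
  have hcomb : x + t • (p - x) - z = (1 - t) • (x - z) + t • (p - z) := by
    module
  rw [hcomb, norm_smul_add_smul_sq (sub_add_cancel 1 t), sub_sub_sub_cancel_right,
    norm_sub_rev x p]
  have hmul := mul_le_mul_of_nonneg_left h ht₀
  have hzt := mul_le_mul_of_nonneg_left hz (by positivity : 0 ≤ t * (2 * α))
  nlinarith [mul_nonneg ht₀ (sub_nonneg.2 ht₁), sq_nonneg ‖p - x‖]

theorem mpg_line_search_decrease [Finite ι] [Nonempty ι] {p : E} {α γ t : ℝ} (hα : 0 < α)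
    (hγ : 0 ≤ γ) (hγα : γ * α ≤ 2) (hH : ∀ i, ConvexOn ℝ D (H i)) (hxD : x ∈ D) (hpD : p ∈ D)
    (ht₀ : 0 ≤ t) (ht₁ : t ≤ 1) (hd : ‖p - x‖ ^ 2 ≤ -α * mpgModel G' H x p)
    (hLS : (∃ j₀, (∀ j, ⟪G' j x, p - x⟫ ≤ ⟪G' j₀ x, p - x⟫) ∧
        G j₀ (x + t • (p - x)) ≤ G j₀ x + t * ⟪G' j₀ x, p - x⟫ + t * (γ / 2) * ‖p - x‖ ^ 2 ∧
        ∀ j, G j (x + t • (p - x)) + H j (x + t • (p - x)) ≤ G j x + H j x) ∨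
      ∀ j, G j (x + t • (p - x)) ≤ G j x + t * ⟪G' j x, p - x⟫ + t * (γ / 2) * ‖p - x‖ ^ 2) :
    (∀ j, G j (x + t • (p - x)) + H j (x + t • (p - x)) ≤ G j x + H j x) ∧
      ∃ j, G j (x + t • (p - x)) + H j (x + t • (p - x)) +
        t * (1 - γ * α / 2) * -mpgModel G' H x p ≤ G j x + H j x := by
  have hdescent := fun j => mpg_descent (G := G) (j := j) hγ (hH j) hxD hpD ht₀ ht₁ hd
  rcases hLS with ⟨j₀, -, harmijo, hmono⟩ | harmijo
  · exact ⟨hmono, j₀, hdescent j₀ harmijo⟩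
  · have hgain : 0 ≤ t * (1 - γ * α / 2) * -mpgModel G' H x p := by
      have : 0 ≤ -α * mpgModel G' H x p := (sq_nonneg _).trans hd
      have : 0 ≤ -mpgModel G' H x p := by nlinarith
      have : 0 ≤ 1 - γ * α / 2 := by linarith
      positivity
    exact ⟨fun j => by linarith [hdescent j (harmijo j)], Classical.arbitrary ι,
      hdescent _ (harmijo _)⟩

end Model

section Sequences

variable {ι E : Type*} [NormedAddCommGroup E] [InnerProductSpace ℝ E]
  {G H : ι → E → ℝ} {G' : ι → E → E} {D : Set E}

theorem tendsto_mpgModel [Fintype ι] [Nonempty ι] {x u : ℕ → E} {z w : E}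
    (hG' : ∀ i, Continuous (G' i)) (hH : ∀ i, ContinuousOn (H i) D) (hx : ∀ k, x k ∈ D)
    (hu : ∀ k, u k ∈ D) (hz : z ∈ D) (hw : w ∈ D) (hxlim : Tendsto x atTop (𝓝 z))
    (hulim : Tendsto u atTop (𝓝 w)) :
    Tendsto (fun k => mpgModel G' H (x k) (u k)) atTop (𝓝 (mpgModel G' H z w)) := by
  have hpair : Tendsto (fun k => (x k, u k)) atTop (𝓝[D ×ˢ D] (z, w)) :=
    tendsto_nhdsWithin_iff.2 ⟨hxlim.prodMk_nhds hulim, Eventually.of_forall fun k => ⟨hx k, hu k⟩⟩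
  have hmodel := ((continuousOn_mpgModel hG' hH) (z, w) ⟨hz, hw⟩).tendsto.comp hpair
  exact hmodel

theorem exists_norm_le_of_backtracking [Fintype ι] [CompleteSpace E] {x d : E} {t γ τ : ℝ}
    (hG : ∀ i, ConvexOn ℝ univ (G i)) (hGdiff : ∀ i y, HasGradientAt (G i) (G' i y) y)
    (hγ : 0 < γ) (hτ : 0 < τ) (ht : 0 ≤ t)
    (hbacktrack : t = 1 ∨ ∃ i, ∃ s : ℝ, 0 < s ∧ s ≤ t / τ ∧
      G i (x + s • d) > G i x + s * ⟪G' i x, d⟫ + s * (γ / 2) * ‖d‖ ^ 2) :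
    ∃ v : E, ‖v‖ ≤ ‖t • d‖ / τ ∧ ‖d‖ ≤ ‖t • d‖ + 2 / γ * ∑ i, ‖G' i (x + v) - G' i x‖ := by
  rcases hbacktrack with rfl | ⟨i, s, hs, hst, hviol⟩
  · exact ⟨0, by simp; positivity, by simp⟩
  refine ⟨s • d, ?_, ?_⟩
  · rw [norm_smul, norm_smul, Real.norm_of_nonneg hs.le, Real.norm_of_nonneg ht, le_div_iff₀ hτ]
    nlinarith [norm_nonneg d, (le_div_iff₀ hτ).1 hst]
  · have hlt := (hG i).mul_norm_lt_norm_gradient_sub (hGdiff i (x + s • d)) hs hviol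
    have hle := Finset.single_le_sum (fun j _ => norm_nonneg (G' j (x + s • d) - G' j x))
      (Finset.mem_univ i)
    have hd : ‖d‖ ≤ 2 / γ * ∑ j, ‖G' j (x + s • d) - G' j x‖ := by
      rw [div_mul_eq_mul_div, le_div_iff₀ hγ]; linarith
    linarith [norm_nonneg (t • d)]

theorem tendsto_direction_zero [Fintype ι] [CompleteSpace E] {x d : ℕ → E} {t : ℕ → ℝ} {z : E}
    {γ τ : ℝ} (hG : ∀ i, ConvexOn ℝ univ (G i)) (hGdiff : ∀ i y, HasGradientAt (G i) (G' i y) y)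
    (hG'c : ∀ i, Continuous (G' i)) (hγ : 0 < γ) (hτ : 0 < τ) (ht : ∀ k, 0 ≤ t k)
    (hiter : ∀ k, x (k + 1) = x k + t k • d k)
    (hbacktrack : ∀ k, t k = 1 ∨ ∃ i, ∃ s : ℝ, 0 < s ∧ s ≤ t k / τ ∧
      G i (x k + s • d k) > G i (x k) + s * ⟪G' i (x k), d k⟫ + s * (γ / 2) * ‖d k‖ ^ 2)
    (hlim : Tendsto x atTop (𝓝 z)) : Tendsto d atTop (𝓝 0) := by
  choose v hv using fun k =>
    exists_norm_le_of_backtracking hG hGdiff hγ hτ (ht k) (hbacktrack k)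
  have hstep : Tendsto (fun k => t k • d k) atTop (𝓝 0) := by
    have h := (hlim.comp (tendsto_add_atTop_nat 1)).sub hlim
    simpa [Function.comp_def, hiter] using h
  have hv0 : Tendsto v atTop (𝓝 0) :=
    squeeze_zero_norm (fun k => (hv k).1) (by simpa using hstep.norm.div_const τ)
  have hgrad : Tendsto (fun k => ∑ i, ‖G' i (x k + v k) - G' i (x k)‖) atTop (𝓝 0) := by
    rw [← Finset.sum_const_zero (s := (Finset.univ : Finset ι))]
    refine tendsto_finsetSum _ fun i _ => ?_
    have h := (((hG'c i).tendsto z).comp (by simpa using hlim.add hv0)).sub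
      (((hG'c i).tendsto z).comp hlim)
    simpa using h.norm
  refine tendsto_zero_iff_norm_tendsto_zero.2 (squeeze_zero (fun k => norm_nonneg _)
    (fun k => (hv k).2) ?_)
  simpa using hstep.norm.add (hgrad.const_mul (2 / γ))

theorem mpgModel_nonneg_of_tendsto [Fintype ι] [Nonempty ι] {x p : ℕ → E} {z y : E} {α : ℝ}
    (hH : ∀ i, ConvexOn ℝ D (H i)) (hHc : ∀ i, ContinuousOn (H i) D)
    (hG'c : ∀ i, Continuous (G' i)) (hx : ∀ k, x k ∈ D) (hp : ∀ k, p k ∈ D)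
    (hpmin : ∀ k, IsMinOn (fun u => mpgModel G' H (x k) u + 1 / (2 * α) * ‖u - x k‖ ^ 2) D (p k))
    (hzD : z ∈ D) (hlim : Tendsto x atTop (𝓝 z)) (hd : Tendsto (fun k => p k - x k) atTop (𝓝 0))
    (hy : y ∈ D) : 0 ≤ mpgModel G' H z y := by
  have hplim : Tendsto p atTop (𝓝 z) := by simpa using hlim.add hd
  have hleft := ((tendsto_mpgModel hG'c hHc hx hp hzD hzD hlim hplim).add
    ((hd.norm.pow 2).const_mul (1 / (2 * α)))).add
    (((tendsto_const_nhds (x := y)).sub hplim).norm.pow 2 |>.const_mul (1 / (2 * α)))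
  have hright := (tendsto_mpgModel hG'c hHc hx (fun _ => hy) hzD hy hlim tendsto_const_nhds).add
    (((tendsto_const_nhds (x := y)).sub hlim).norm.pow 2 |>.const_mul (1 / (2 * α)))
  have h := le_of_tendsto_of_tendsto' hleft hright fun k =>
    (convexOn_mpgModel hH).three_point_of_isMinOn (hpmin k) (hp k) hy
  simp only [mpgModel_self, norm_zero] at h
  linarith

end Sequences

theorem MPG_convergence_general {n m : ℕ} (hm : 0 < m)
    (G : Fin m → EuclideanSpace ℝ (Fin n) → ℝ)
    (G' : Fin m → EuclideanSpace ℝ (Fin n) → EuclideanSpace ℝ (Fin n))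
    (H : Fin m → EuclideanSpace ℝ (Fin n) → ℝ)
    (dom : Set (EuclideanSpace ℝ (Fin n)))
    (hGconv : ∀ j, ConvexOn ℝ Set.univ (G j))
    (hGdiff : ∀ j x, HasGradientAt (G j) (G' j x) x)
    (hG'cont : ∀ j, Continuous (G' j))
    (hHconv : ∀ j, ConvexOn ℝ dom (H j))
    (hHcont : ∀ j, ContinuousOn (H j) dom)
    (hdomcl : IsClosed dom)
    (α γ τ₁ : ℝ) (hα : 0 < α) (hγ : 0 < γ) (hγ2 : γ < 2 / α)
    (hτ₁ : 0 < τ₁)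
    (x p : ℕ → EuclideanSpace ℝ (Fin n)) (t : ℕ → ℝ)
    (hx : ∀ k, x k ∈ dom) (hp : ∀ k, p k ∈ dom)
    (hpmin : ∀ k, IsMinOn
      (fun u => (⨆ i, (⟪G' i (x k), u - x k⟫ + H i u - H i (x k))) +
        1 / (2 * α) * ‖u - x k‖ ^ 2) dom (p k))
    (ht : ∀ k, 0 < t k ∧ t k ≤ 1)
    (hiter : ∀ k, x (k + 1) = x k + t k • (p k - x k))
    (hLS : ∀ k,
      (∃ jstar : Fin m,
        (∀ j, ⟪G' j (x k), p k - x k⟫ ≤ ⟪G' jstar (x k), p k - x k⟫) ∧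
        G jstar (x (k + 1)) ≤ G jstar (x k) + t k * ⟪G' jstar (x k), p k - x k⟫ +
          t k * (γ / 2) * ‖p k - x k‖ ^ 2 ∧
        (∀ j, G j (x (k + 1)) + H j (x (k + 1)) ≤ G j (x k) + H j (x k))) ∨
      (∀ j, G j (x (k + 1)) ≤ G j (x k) + t k * ⟪G' j (x k), p k - x k⟫ +
        t k * (γ / 2) * ‖p k - x k‖ ^ 2))
    (hbacktrack : ∀ k, t k = 1 ∨ ∃ i : Fin m, ∃ tbar : ℝ, 0 < tbar ∧ tbar ≤ t k / τ₁ ∧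
      G i (x k + tbar • (p k - x k)) > G i (x k) + tbar * ⟪G' i (x k), p k - x k⟫ +
        tbar * (γ / 2) * ‖p k - x k‖ ^ 2)
    (hA1 : ∀ y : ℕ → EuclideanSpace ℝ (Fin n), (∀ k, y k ∈ dom) →
      (∀ k j, G j (y (k + 1)) + H j (y (k + 1)) ≤ G j (y k) + H j (y k)) →
      ∃ ybar ∈ dom, ∀ k j, G j ybar + H j ybar ≤ G j (y k) + H j (y k)) :
    ∃ xbar ∈ dom, Tendsto x atTop (𝓝 xbar) ∧
      ¬ ∃ y ∈ dom, ∀ j, G j y + H j y < G j xbar + H j xbar := by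
  have : Nonempty (Fin m) := ⟨⟨0, hm⟩⟩
  have hγα : γ * α < 2 := (lt_div_iff₀ hα).1 hγ2
  set S := fun k => mpgModel G' H (x k) (p k)
  have hd k : ‖p k - x k‖ ^ 2 ≤ -α * S k :=
    sq_norm_sub_le_neg_mul_mpgModel hα hHconv (hpmin k) (hp k) (hx k)
  have hdec k := mpg_line_search_decrease hα hγ.le hγα.le hHconv (hx k) (hp k) (ht k).1.le
    (ht k).2 (hd k) (by simpa only [hiter k] using hLS k)
  simp only [← hiter] at hdec
  obtain ⟨ybar, hybar, hybar_le⟩ := hA1 x hx fun k => (hdec k).1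
  have hS k : 0 ≤ -S k := by nlinarith [(sq_nonneg _).trans (hd k)]
  have hsum : Summable fun k => t k * (1 - γ * α / 2) * -S k :=
    summable_of_forall_le_of_exists_add_le (fun j => G j ybar + H j ybar)
      (fun k => mul_nonneg (mul_nonneg (ht k).1.le (by linarith)) (hS k))
      (fun k => (hdec k).1) (fun k => (hdec k).2) hybar_le
  have hfejer_sum : Summable fun k => 2 * α * t k * -S k := by
    have hc : 2 - α * γ ≠ 0 := (by linarith : 0 < 2 - α * γ).ne'
    refine (hsum.mul_left (2 * α / (1 - γ * α / 2))).congr fun k => ?_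
    field_simp
  obtain ⟨xbar, ⟨hxbar, -⟩, hlim⟩ := exists_tendsto_of_quasiFejer (x := x)
    (Z := {z | z ∈ dom ∧ ∀ k j, G j z + H j z ≤ G j (x k) + H j (x k)})
    (fun k => mul_nonneg (mul_nonneg (by positivity) (ht k).1.le) (hS k)) hfejer_sum
    ⟨ybar, hybar, hybar_le⟩
    (fun z ⟨hz, hz_le⟩ k => by
      rw [dist_eq_norm, dist_eq_norm, hiter k]
      exact sq_norm_mpg_step_sub_le hα hHconv (hpmin k) (hp k) hz (ht k).1.le (ht k).2
        (mpgModel_nonpos hGconv (fun i => hGdiff i (x k)) (hz_le k)))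
    (fun z φ hφ hφlim => by
      have hz := hdomcl.mem_of_tendsto hφlim (Eventually.of_forall fun l => hx _)
      exact ⟨hz, fun k j => le_of_antitone_of_tendsto_subseq (f := fun u => G j u + H j u)
        ((hGdiff j z).continuousAt.continuousWithinAt.add (hHcont j z hz)) hx
        (antitone_nat_of_succ_le fun k => (hdec k).1 j) hφ hφlim k⟩)
  have hdir := tendsto_direction_zero hGconv hGdiff hG'cont hγ hτ₁ (fun k => (ht k).1.le) hiter
    hbacktrack hlim
  exact ⟨xbar, hxbar, hlim, not_exists_lt_of_mpgModel_nonneg hGconv (fun i => hGdiff i xbar)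
    fun y hy => mpgModel_nonneg_of_tendsto hHconv hHcont hG'cont hx hp hpmin hxbar hlim hdir hy⟩

/-- Full convergence of the MPG algorithm: under assumption (A1), the generated sequence
converges to a weakly Pareto optimal point of the problem `min F`. -/
theorem MPG_convergence {n m : ℕ} (hm : 0 < m)
    (G : Fin m → EuclideanSpace ℝ (Fin n) → ℝ)
    (G' : Fin m → EuclideanSpace ℝ (Fin n) → EuclideanSpace ℝ (Fin n))
    (H : Fin m → EuclideanSpace ℝ (Fin n) → ℝ)
    (dom : Set (EuclideanSpace ℝ (Fin n)))
    (hGconv : ∀ j, ConvexOn ℝ Set.univ (G j))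
    (hGdiff : ∀ j x, HasGradientAt (G j) (G' j x) x)
    (hG'cont : ∀ j, Continuous (G' j))
    (hHconv : ∀ j, ConvexOn ℝ dom (H j))
    (hHcont : ∀ j, ContinuousOn (H j) dom)
    (hdomne : dom.Nonempty) (hdomcl : IsClosed dom) (hdomconv : Convex ℝ dom)
    (α γ τ₁ τ₂ : ℝ) (hα : 0 < α) (hγ : 0 < γ) (hγ2 : γ < 2 / α)
    (hτ₁ : 0 < τ₁) (hτ₁₂ : τ₁ < τ₂) (hτ₂ : τ₂ < 1)
    (x p : ℕ → EuclideanSpace ℝ (Fin n)) (t : ℕ → ℝ)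
    (hx : ∀ k, x k ∈ dom) (hp : ∀ k, p k ∈ dom)
    (hpmin : ∀ k, IsMinOn
      (fun u => (⨆ i, (⟪G' i (x k), u - x k⟫ + H i u - H i (x k))) +
        1 / (2 * α) * ‖u - x k‖ ^ 2) dom (p k))
    (ht : ∀ k, 0 < t k ∧ t k ≤ 1)
    (hiter : ∀ k, x (k + 1) = x k + t k • (p k - x k))
    (hLS : ∀ k,
      (∃ jstar : Fin m,
        (∀ j, ⟪G' j (x k), p k - x k⟫ ≤ ⟪G' jstar (x k), p k - x k⟫) ∧
        G jstar (x (k + 1)) ≤ G jstar (x k) + t k * ⟪G' jstar (x k), p k - x k⟫ +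
          t k * (γ / 2) * ‖p k - x k‖ ^ 2 ∧
        (∀ j, G j (x (k + 1)) + H j (x (k + 1)) ≤ G j (x k) + H j (x k))) ∨
      (∀ j, G j (x (k + 1)) ≤ G j (x k) + t k * ⟪G' j (x k), p k - x k⟫ +
        t k * (γ / 2) * ‖p k - x k‖ ^ 2))
    (hbacktrack : ∀ k, t k = 1 ∨ ∃ i : Fin m, ∃ tbar : ℝ, 0 < tbar ∧ tbar ≤ t k / τ₁ ∧
      G i (x k + tbar • (p k - x k)) > G i (x k) + tbar * ⟪G' i (x k), p k - x k⟫ +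
        tbar * (γ / 2) * ‖p k - x k‖ ^ 2)
    (hA1 : ∀ y : ℕ → EuclideanSpace ℝ (Fin n), (∀ k, y k ∈ dom) →
      (∀ k j, G j (y (k + 1)) + H j (y (k + 1)) ≤ G j (y k) + H j (y k)) →
      ∃ ybar ∈ dom, ∀ k j, G j ybar + H j ybar ≤ G j (y k) + H j (y k)) :
    ∃ xbar ∈ dom, Tendsto x atTop (𝓝 xbar) ∧
      ¬ ∃ y ∈ dom, ∀ j, G j y + H j y < G j xbar + H j xbar :=
  MPG_convergence_general hm G G' H dom hGconv hGdiff hG'cont hHconv hHcont hdomcl α γ τ₁ hα hγ hγ2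
    hτ₁ x p t hx hp hpmin ht hiter hLS hbacktrack hA1
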